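/- Let (X, d) be a metric space, m ∈ ℕ, and let k : (0,∞) × X × X → [0,∞) satisfy the lower bound k(t,x,y) ≥ c · e(t,x,y) for all t ∈ (0,1] and x, y ∈ X, for some constant c > 0, where e(t,x,y) := (4πt)^{−m/2} exp(−d(x,y)²/(4t)). Let V be a real normed vector space and q, q' : (0,∞) × X × X → V. Suppose there exist constants C ≥ 0, α, β ≥ 0 with β + α/2 > 1, and T ∈ (0, 1/2] such that ‖q(t,x,y) − q'(t,x,y)‖ ≤ C · e(t,x,y) · d(x,y)^α · t^β for all t ∈ (0,T] and x, y ∈ X. Then there exists a constant C' > 0 such that ‖q(t,x,y) − q'(t,x,y)‖ ≤ C' · t^{β+α/2} · k(2t,x,y) for all t ∈ (0,T] and x, y ∈ X; in particular the exponent β + α/2 of t is strictly greater than 1. -/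

import Mathlib

/-!
Writing `e(t) = 2^{m/2} exp(-d²/(8t)) e(2t)`, the factor `d^α exp(-d²/(8t))` is at most a
constant times `t^{α/2}`, since `u^s e^{-u}` is bounded on `[0, ∞)`. Hence
`C e(t) d^α t^β ≲ t^{β+α/2} e(2t)`, and `e(2t) ≤ k(2t)/c` as long as `2t ≤ 2T ≤ 1`.
-/

/-- The Gaussian kernel `e(t,x,y) := (4πt)^{−m/2} exp(−d(x,y)²/(4t))` on a metric space. -/
noncomputable def gaussKernel {X : Type*} [MetricSpace X] (m : ℕ) (t : ℝ) (x y : X) : ℝ :=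
  (4 * Real.pi * t) ^ (-(m : ℝ) / 2) * Real.exp (-(dist x y) ^ 2 / (4 * t))

open Real

/-- `u ↦ u ^ s * exp (-u / b)` is maximal at `u = s * b`. -/
theorem rpow_mul_exp_neg_div_le {s b u : ℝ} (hs : 0 ≤ s) (hb : 0 < b) (hu : 0 ≤ u) :
    u ^ s * exp (-u / b) ≤ (s * b / exp 1) ^ s := by
  rcases hs.eq_or_lt with rfl | hs_pos
  · simpa using div_nonpos_of_nonpos_of_nonneg (neg_nonpos.2 hu) hb.le
  have hmax : u * exp (-u / (s * b)) ≤ s * b / exp 1 := by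
    have := mul_exp_neg_le_exp_neg_one (u / (s * b))
    rw [exp_neg 1] at this
    calc u * exp (-u / (s * b)) = s * b * (u / (s * b) * exp (-(u / (s * b)))) := by
          field_simp
      _ ≤ s * b * (exp 1)⁻¹ := by gcongr
      _ = s * b / exp 1 := by ring
  calc u ^ s * exp (-u / b) = (u * exp (-u / (s * b))) ^ s := by
        rw [mul_rpow hu (exp_pos _).le, ← exp_mul]
        congr 2
        field_simp
    _ ≤ (s * b / exp 1) ^ s := by gcongr

section gaussKernel

variable {X : Type*} [MetricSpace X] (m : ℕ)

theorem gaussKernel_nonneg {t : ℝ} (ht : 0 ≤ t) (x y : X) :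
    0 ≤ gaussKernel m t x y := by
  unfold gaussKernel; positivity

theorem gaussKernel_eq_mul_gaussKernel_two_mul {t : ℝ} (ht : 0 < t) (x y : X) :
    gaussKernel m t x y
      = 2 ^ ((m : ℝ) / 2) * exp (-dist x y ^ 2 / (8 * t)) * gaussKernel m (2 * t) x y := by
  have hscale : (4 * π * (2 * t)) ^ (-(m : ℝ) / 2)
      = 2 ^ (-(m : ℝ) / 2) * (4 * π * t) ^ (-(m : ℝ) / 2) := by
    rw [show 4 * π * (2 * t) = 2 * (4 * π * t) by ring, mul_rpow zero_le_two (by positivity)]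
  have hexp : exp (-dist x y ^ 2 / (4 * t))
      = exp (-dist x y ^ 2 / (8 * t)) * exp (-dist x y ^ 2 / (4 * (2 * t))) := by
    rw [← exp_add]; congr 1; field_simp; ring
  have htwo : (2 : ℝ) ^ ((m : ℝ) / 2) * 2 ^ (-(m : ℝ) / 2) = 1 := by
    rw [← rpow_add two_pos, show (m : ℝ) / 2 + -(m : ℝ) / 2 = 0 by ring, rpow_zero]
  unfold gaussKernel
  rw [hscale, hexp]
  linear_combination -((4 * π * t) ^ (-(m : ℝ) / 2) * exp (-dist x y ^ 2 / (8 * t))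
    * exp (-dist x y ^ 2 / (4 * (2 * t)))) * htwo

theorem gaussKernel_mul_dist_rpow_le {α t : ℝ} (hα : 0 ≤ α) (ht : 0 < t) (x y : X) :
    gaussKernel m t x y * dist x y ^ α
      ≤ 2 ^ ((m : ℝ) / 2) * (4 * α / exp 1) ^ (α / 2) * t ^ (α / 2)
        * gaussKernel m (2 * t) x y := by
  have hdist : dist x y ^ α * exp (-dist x y ^ 2 / (8 * t))
      ≤ (4 * α / exp 1) ^ (α / 2) * t ^ (α / 2) := by
    have hsq : dist x y ^ α = (dist x y ^ 2) ^ (α / 2) := by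
      rw [← rpow_natCast, ← rpow_mul dist_nonneg]; congr 1; ring
    have hconst : (4 * α / exp 1) ^ (α / 2) * t ^ (α / 2)
        = (α / 2 * (8 * t) / exp 1) ^ (α / 2) := by
      rw [← mul_rpow (by positivity) ht.le]; ring_nf
    rw [hsq, hconst]
    exact rpow_mul_exp_neg_div_le (by positivity) (by positivity) (by positivity)
  rw [gaussKernel_eq_mul_gaussKernel_two_mul m ht]
  have he := gaussKernel_nonneg m (by positivity : 0 ≤ 2 * t) x y
  calc 2 ^ ((m : ℝ) / 2) * exp (-dist x y ^ 2 / (8 * t)) * gaussKernel m (2 * t) x y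
        * dist x y ^ α
      = 2 ^ ((m : ℝ) / 2) * (dist x y ^ α * exp (-dist x y ^ 2 / (8 * t)))
        * gaussKernel m (2 * t) x y := by ring
    _ ≤ 2 ^ ((m : ℝ) / 2) * ((4 * α / exp 1) ^ (α / 2) * t ^ (α / 2))
        * gaussKernel m (2 * t) x y := by gcongr
    _ = _ := by ring

end gaussKernel

theorem heat_related_of_gauss_est_general {X : Type*} [MetricSpace X] (m : ℕ)
    {V : Type*} [NormedAddCommGroup V] [NormedSpace ℝ V]
    (k : ℝ → X → X → ℝ)
    (c : ℝ) (hc : 0 < c)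
    (hk : ∀ t : ℝ, 0 < t → t ≤ 1 → ∀ x y : X, c * gaussKernel m t x y ≤ k t x y)
    (q q' : ℝ → X → X → V)
    (C α β T : ℝ) (hC : 0 ≤ C) (hα : 0 ≤ α)
    (hexp : 1 < β + α / 2) (hT : T ≤ 1 / 2)
    (hqq' : ∀ t : ℝ, 0 < t → t ≤ T → ∀ x y : X,
      ‖q t x y - q' t x y‖ ≤ C * gaussKernel m t x y * (dist x y) ^ α * t ^ β) :
    (∃ C' : ℝ, 0 < C' ∧ ∀ t : ℝ, 0 < t → t ≤ T → ∀ x y : X,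
      ‖q t x y - q' t x y‖ ≤ C' * t ^ (β + α / 2) * k (2 * t) x y) ∧ 1 < β + α / 2 := by
  set K := 2 ^ ((m : ℝ) / 2) * (4 * α / exp 1) ^ (α / 2)
  refine ⟨⟨C * K / c + 1, by positivity, fun t ht htT x y => ?_⟩, hexp⟩
  have h2t : 0 < 2 * t := by positivity
  have hk2t := hk (2 * t) h2t (by linarith) x y
  have hkpos : 0 ≤ k (2 * t) x y :=
    (mul_nonneg hc.le (gaussKernel_nonneg m h2t.le x y)).trans hk2t
  calc ‖q t x y - q' t x y‖
      ≤ C * t ^ β * (gaussKernel m t x y * dist x y ^ α) :=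
        (hqq' t ht htT x y).trans_eq (by ring)
    _ ≤ C * t ^ β * (K * t ^ (α / 2) * gaussKernel m (2 * t) x y) := by
        gcongr C * t ^ β * ?_; exact gaussKernel_mul_dist_rpow_le m hα ht x y
    _ ≤ C * t ^ β * (K * t ^ (α / 2) * (k (2 * t) x y / c)) := by
        gcongr; rwa [le_div_iff₀' hc]
    _ = C * K / c * t ^ (β + α / 2) * k (2 * t) x y := by rw [rpow_add ht]; ring
    _ ≤ (C * K / c + 1) * t ^ (β + α / 2) * k (2 * t) x y := by gcongr; linarith

/-- Let `(X,d)` be a metric space, `m ∈ ℕ`, and `k : (0,∞) × X × X → [0,∞)` satisfying the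
lower bound `k(t,x,y) ≥ c · e(t,x,y)` for `t ∈ (0,1]` and some `c > 0`. Let `V` be a real
normed vector space and `q, q' : (0,∞) × X × X → V`. Suppose there are constants `C ≥ 0`,
`α, β ≥ 0` with `β + α/2 > 1` and `T ∈ (0, 1/2]` such that
`‖q(t,x,y) − q'(t,x,y)‖ ≤ C · e(t,x,y) · d(x,y)^α · t^β` for all `t ∈ (0,T]` and `x, y ∈ X`.
Then there is `C' > 0` with `‖q(t,x,y) − q'(t,x,y)‖ ≤ C' · t^{β+α/2} · k(2t,x,y)` for all
`t ∈ (0,T]` and `x, y ∈ X`; in particular the exponent `β + α/2` of `t` is strictly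
greater than `1`. -/
theorem heat_related_of_gauss_est {X : Type*} [MetricSpace X] (m : ℕ)
    {V : Type*} [NormedAddCommGroup V] [NormedSpace ℝ V]
    (k : ℝ → X → X → ℝ) (hknn : ∀ t : ℝ, 0 < t → ∀ x y : X, 0 ≤ k t x y)
    (c : ℝ) (hc : 0 < c)
    (hk : ∀ t : ℝ, 0 < t → t ≤ 1 → ∀ x y : X, c * gaussKernel m t x y ≤ k t x y)
    (q q' : ℝ → X → X → V)
    (C α β T : ℝ) (hC : 0 ≤ C) (hα : 0 ≤ α) (hβ : 0 ≤ β)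
    (hexp : 1 < β + α / 2) (hT0 : 0 < T) (hT : T ≤ 1 / 2)
    (hqq' : ∀ t : ℝ, 0 < t → t ≤ T → ∀ x y : X,
      ‖q t x y - q' t x y‖ ≤ C * gaussKernel m t x y * (dist x y) ^ α * t ^ β) :
    (∃ C' : ℝ, 0 < C' ∧ ∀ t : ℝ, 0 < t → t ≤ T → ∀ x y : X,
      ‖q t x y - q' t x y‖ ≤ C' * t ^ (β + α / 2) * k (2 * t) x y) ∧ 1 < β + α / 2 :=
  heat_related_of_gauss_est_general m k c hc hk q q' C α β T hC hα hexp hT hqq'
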